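/- Let M ⊆ ℚ^n be an almost unimodular set of rank d and volume m such that every nonzero determinant of a d-tuple of vectors from M equals ±m or ±2m, and fix a basis (v̄1,…,v̄d) of vectors from M with det(v̄1,…,v̄d) = 2m. For v ∈ M, let S(v) denote the set of indices i such that the i-th coordinate of v in the basis (v̄1,…,v̄d) equals ±1/2. Then for any two vectors v1, v2 ∈ M with S(v1) ≠ ∅ and S(v2) ≠ ∅, one has S(v1) = S(v2). -/

import Mathlib

/-- `v` is a linear combination of the vectors in `M` with integer coefficients. -/
def memZSpan {n : ℕ} (M : Finset (Fin n → ℚ)) (v : Fin n → ℚ) : Prop :=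
  ∃ c : (Fin n → ℚ) → ℤ, v = ∑ w ∈ M, (c w : ℚ) • w

/-- `v` is a linear combination of the vectors in `M` with nonnegative rational coefficients. -/
def memQnnSpan {n : ℕ} (M : Finset (Fin n → ℚ)) (v : Fin n → ℚ) : Prop :=
  ∃ q : (Fin n → ℚ) → ℚ, (∀ w, 0 ≤ q w) ∧ v = ∑ w ∈ M, q w • w

/-- `v` is a linear combination of the vectors in `M` with nonnegative integer coefficients. -/
def memNSpan {n : ℕ} (M : Finset (Fin n → ℚ)) (v : Fin n → ℚ) : Prop :=
  ∃ a : (Fin n → ℚ) → ℕ, v = ∑ w ∈ M, (a w : ℚ) • w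

/-- A finite set `M ⊆ ℚ^n` is saturated if `ℤ≥0(M) = ℤ(M) ∩ ℚ≥0(M)`. -/
def Saturated {n : ℕ} (M : Finset (Fin n → ℚ)) : Prop :=
  ∀ v : Fin n → ℚ, memZSpan M v → memQnnSpan M v → memNSpan M v

/-- The determinant of a `d`-tuple of vectors from `M`, computed with respect to a fixed
basis `b` of the linear span of `M`. -/
noncomputable def detT {n d : ℕ} (M : Finset (Fin n → ℚ))
    (b : Module.Basis (Fin d) ℚ (Submodule.span ℚ (M : Set (Fin n → ℚ))))
    (w : Fin d → M) : ℚ :=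
  Matrix.det (Matrix.of fun i j =>
    b.repr ⟨(w i : Fin n → ℚ), Submodule.subset_span (Finset.mem_coe.mpr (w i).2)⟩ j)

/-!
Replacing `v̄ₖ` by `v = ∑ cᵢ v̄ᵢ` multiplies the determinant by `cₖ`, and replacing `v̄ᵢ` by `v₁`
and `v̄ⱼ` by `v₂` multiplies it by the minor `c₁ᵢ c₂ⱼ - c₁ⱼ c₂ᵢ`; since `det(v̄) = 2m`, all these
factors lie in `{0, ±1/2, ±1}`. If `i ∈ S(v₁)` and `j ∈ S(v₂) \ S(v₁)`, then `c₁ⱼ ∈ {0, ±1}`, so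
the minor is `±1/4` minus an element of `{0, ±1/2, ±1}`, which is impossible. That `m ≠ 0` follows
because `M` spans a `d`-dimensional space, so some `d`-tuple from `M` has nonzero determinant.
-/

open Function

namespace AlternatingMap

variable {R M N ι : Type*} [CommRing R] [AddCommGroup M] [Module R M] [AddCommGroup N]
  [Module R N] [Fintype ι] [DecidableEq ι] (f : M [⋀^ι]→ₗ[R] N) (v : ι → M)

theorem map_update_sum_smul (i : ι) (c : ι → R) :
    f (update v i (∑ k, c k • v k)) = c i • f v := by
  rw [f.map_update_sum, Fintype.sum_eq_single i
    (fun k hki => by rw [f.map_update_smul, f.map_update_self v hki.symm, smul_zero]),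
    f.map_update_smul, update_eq_self]

theorem map_update_update_sum_smul {i j : ι} (hij : i ≠ j) (c e : ι → R) :
    f (update (update v i (∑ k, c k • v k)) j (∑ l, e l • v l))
      = (c i * e j - c j * e i) • f v := by
  have swapped : f (update (update v i (∑ k, c k • v k)) j (v i)) = -(c j • f v) := by
    rw [update_comm hij, f.map_update_sum, Fintype.sum_eq_single j, f.map_update_smul,
      ← Equiv.comp_swap_eq_update, f.map_swap v hij, smul_neg]
    intro k hkj
    rw [f.map_update_smul]
    by_cases hki : k = i
    · rw [hki, f.map_update_update v hij.symm, smul_zero]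
    · rw [f.map_eq_zero_of_eq _ (i := i) (j := k) (by simp [hki, hkj]) (Ne.symm hki), smul_zero]
  have unchanged : update (update v i (∑ k, c k • v k)) j (v j) = update v i (∑ k, c k • v k) :=
    update_eq_self_iff.mpr (update_of_ne hij.symm _ _).symm
  rw [f.map_update_sum, Fintype.sum_eq_add j i hij.symm, f.map_update_smul, f.map_update_smul,
    unchanged, f.map_update_sum_smul, swapped]
  · rw [smul_neg, smul_smul, smul_smul, ← sub_eq_add_neg, ← sub_smul, mul_comm (e j),
      mul_comm (e i)]
  · rintro l ⟨hlj, hli⟩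
    rw [f.map_update_smul, f.map_eq_zero_of_eq _ (i := j) (j := l) (by simp [hlj, hli])
      (Ne.symm hlj), smul_zero]

theorem eq_zero_of_forall_mem {K V N ι : Type*} [Field K] [AddCommGroup V] [Module K V]
    [AddCommGroup N] [Module K N] [Finite ι] (f : V [⋀^ι]→ₗ[K] N) {s : Set V}
    (hs : ⊤ ≤ Submodule.span K s) (hf : ∀ v : ι → V, (∀ i, v i ∈ s) → f v = 0) : f = 0 := by
  let e := Module.Basis.ofSpan hs
  have : f.toMultilinearMap = 0 := Module.Basis.ext_multilinear (fun _ => e) fun w =>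
    hf _ fun i => Module.Basis.ofSpan_subset hs ⟨w i, rfl⟩
  ext v
  exact DFunLike.congr_fun this v

end AlternatingMap

-- the set `S(v)` of a vector `v` with coordinates `c`
def halfSupport {d : ℕ} (c : Fin d → ℚ) : Set (Fin d) := {i | c i = 1 / 2 ∨ c i = -(1 / 2)}

def admissibleCoeffs : Set ℚ := {0, 1 / 2, -(1 / 2), 1, -1}

theorem mem_admissibleCoeffs_of_mul_two_mul {m t : ℚ} (hm : m ≠ 0)
    (h : t * (2 * m) = 0 ∨ t * (2 * m) = m ∨ t * (2 * m) = -m ∨ t * (2 * m) = 2 * m ∨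
      t * (2 * m) = -(2 * m)) :
    t ∈ admissibleCoeffs := by
  have ht : t = t * (2 * m) / (2 * m) := by field_simp
  rcases h with h | h | h | h | h <;> rw [ht, h] <;> field_simp <;> simp [admissibleCoeffs]

theorem quarter_sub_mul_notMem {a c x y : ℚ} (ha : a = 1 / 2 ∨ a = -(1 / 2))
    (hc : c = 1 / 2 ∨ c = -(1 / 2)) (hx : x ∈ admissibleCoeffs)
    (hx' : ¬(x = 1 / 2 ∨ x = -(1 / 2))) (hy : y ∈ admissibleCoeffs) :
    a * c - x * y ∉ admissibleCoeffs := by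
  obtain rfl | rfl | rfl : x = 0 ∨ x = 1 ∨ x = -1 := by
    rcases hx with h | h | h | h | h <;> simp_all
  all_goals
    rcases ha with rfl | rfl <;> rcases hc with rfl | rfl <;>
      rcases hy with rfl | rfl | rfl | rfl | rfl <;> norm_num [admissibleCoeffs]

section

variable {n d : ℕ} (M : Finset (Fin n → ℚ))
  (b : Module.Basis (Fin d) ℚ (Submodule.span ℚ (M : Set (Fin n → ℚ))))

def toSpan (x : M) : Submodule.span ℚ (M : Set (Fin n → ℚ)) :=
  ⟨x, Submodule.subset_span (Finset.mem_coe.mpr x.2)⟩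

theorem detT_eq_det (w : Fin d → M) : detT M b w = b.det (toSpan M ∘ w) := by
  rw [detT, b.det_apply, ← Matrix.det_transpose]
  rfl

theorem toSpan_eq_sum {x : M} {vb : Fin d → M} {c : Fin d → ℚ}
    (h : (x : Fin n → ℚ) = ∑ k, c k • (vb k : Fin n → ℚ)) :
    toSpan M x = ∑ k, c k • toSpan M (vb k) :=
  Subtype.ext (by simpa [toSpan] using h)

theorem detT_update {vb : Fin d → M} {x : M} {c : Fin d → ℚ}
    (h : (x : Fin n → ℚ) = ∑ k, c k • (vb k : Fin n → ℚ)) (k : Fin d) :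
    detT M b (update vb k x) = c k * detT M b vb := by
  rw [detT_eq_det, detT_eq_det, comp_update, toSpan_eq_sum M h]
  exact b.det.map_update_sum_smul _ k c

theorem detT_update_update {vb : Fin d → M} {x y : M} {c e : Fin d → ℚ}
    (hx : (x : Fin n → ℚ) = ∑ k, c k • (vb k : Fin n → ℚ))
    (hy : (y : Fin n → ℚ) = ∑ k, e k • (vb k : Fin n → ℚ)) {i j : Fin d} (hij : i ≠ j) :
    detT M b (update (update vb i x) j y) = (c i * e j - c j * e i) * detT M b vb := by
  rw [detT_eq_det, detT_eq_det, comp_update, comp_update, toSpan_eq_sum M hx,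
    toSpan_eq_sum M hy]
  exact b.det.map_update_update_sum_smul _ hij c e

theorem exists_detT_ne_zero : ∃ w : Fin d → M, detT M b w ≠ 0 := by
  by_contra! h
  refine b.det_ne_zero (b.det.eq_zero_of_forall_mem (s := Set.range (toSpan M)) ?_ ?_)
  · have : Set.range (toSpan M) =
        ((↑) : Submodule.span ℚ (M : Set (Fin n → ℚ)) → Fin n → ℚ) ⁻¹' M := by
      ext x
      exact ⟨by rintro ⟨y, rfl⟩; exact y.2, fun hx => ⟨⟨x.1, hx⟩, rfl⟩⟩
    rw [this, Submodule.span_span_coe_preimage]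
  · intro v hv
    choose w hw using hv
    rw [show v = toSpan M ∘ w from funext fun i => (hw i).symm, ← detT_eq_det]
    exact h w

theorem ne_zero_of_forall_detT {m : ℚ}
    (hval : ∀ w : Fin d → M, detT M b w = 0 ∨ detT M b w = m ∨ detT M b w = -m ∨
      detT M b w = 2 * m ∨ detT M b w = -(2 * m)) :
    m ≠ 0 := by
  rintro rfl
  obtain ⟨w, hw⟩ := exists_detT_ne_zero M b
  rcases hval w with h | h | h | h | h <;> simp [h] at hw

theorem mem_admissibleCoeffs_of_detT_eq {m : ℚ} (hm : m ≠ 0)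
    (hval : ∀ w : Fin d → M, detT M b w = 0 ∨ detT M b w = m ∨ detT M b w = -m ∨
      detT M b w = 2 * m ∨ detT M b w = -(2 * m))
    {vb : Fin d → M} (hvb : detT M b vb = 2 * m) {w : Fin d → M} {t : ℚ}
    (h : detT M b w = t * detT M b vb) :
    t ∈ admissibleCoeffs := by
  have hw := hval w
  rw [h, hvb] at hw
  exact mem_admissibleCoeffs_of_mul_two_mul hm hw

theorem halfSupport_subset {m : ℚ} (hm : m ≠ 0)
    (hval : ∀ w : Fin d → M, detT M b w = 0 ∨ detT M b w = m ∨ detT M b w = -m ∨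
      detT M b w = 2 * m ∨ detT M b w = -(2 * m))
    {vb : Fin d → M} (hvb : detT M b vb = 2 * m)
    {v1 v2 : Fin n → ℚ} (h1 : v1 ∈ M) (h2 : v2 ∈ M) {c1 c2 : Fin d → ℚ}
    (hc1 : v1 = ∑ i, c1 i • (vb i : Fin n → ℚ)) (hc2 : v2 = ∑ i, c2 i • (vb i : Fin n → ℚ))
    (hS1 : (halfSupport c1).Nonempty) :
    halfSupport c2 ⊆ halfSupport c1 := by
  have coeff_mem {v : Fin n → ℚ} (hv : v ∈ M) {c : Fin d → ℚ}
      (hc : v = ∑ i, c i • (vb i : Fin n → ℚ)) (k : Fin d) : c k ∈ admissibleCoeffs :=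
    mem_admissibleCoeffs_of_detT_eq M b hm hval hvb (detT_update M b (x := ⟨v, hv⟩) hc k)
  intro j hj
  by_contra hj1
  obtain ⟨i, hi⟩ := hS1
  have hij : i ≠ j := fun h => hj1 (h ▸ hi)
  have minor_mem := mem_admissibleCoeffs_of_detT_eq M b hm hval hvb
    (detT_update_update M b (x := ⟨v1, h1⟩) (y := ⟨v2, h2⟩) hc1 hc2 hij)
  exact quarter_sub_mul_notMem hi hj (coeff_mem h1 hc1 j) hj1 (coeff_mem h2 hc2 i) minor_mem

end

theorem stmt9_general {n d : ℕ} (M : Finset (Fin n → ℚ))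
    (b : Module.Basis (Fin d) ℚ (Submodule.span ℚ (M : Set (Fin n → ℚ))))
    (m : ℚ)
    (hval : ∀ w : Fin d → M, detT M b w = 0 ∨ detT M b w = m ∨ detT M b w = -m ∨
      detT M b w = 2 * m ∨ detT M b w = -(2 * m))
    (vb : Fin d → M) (hvb : detT M b vb = 2 * m)
    (v1 v2 : Fin n → ℚ) (h1 : v1 ∈ M) (h2 : v2 ∈ M)
    (c1 c2 : Fin d → ℚ)
    (hc1 : v1 = ∑ i, c1 i • (vb i : Fin n → ℚ))
    (hc2 : v2 = ∑ i, c2 i • (vb i : Fin n → ℚ))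
    (hS1 : {i : Fin d | c1 i = 1 / 2 ∨ c1 i = -(1 / 2)}.Nonempty)
    (hS2 : {i : Fin d | c2 i = 1 / 2 ∨ c2 i = -(1 / 2)}.Nonempty) :
    {i : Fin d | c1 i = 1 / 2 ∨ c1 i = -(1 / 2)} =
      {i : Fin d | c2 i = 1 / 2 ∨ c2 i = -(1 / 2)} := by
  have hm := ne_zero_of_forall_detT M b hval
  exact (halfSupport_subset M b hm hval hvb h2 h1 hc2 hc1 hS2).antisymm
    (halfSupport_subset M b hm hval hvb h1 h2 hc1 hc2 hS1)

/-- Let `M ⊆ ℚ^n` be an almost unimodular set of rank `d` and volume `m` all of whose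
nonzero determinants equal `±m` or `±2m`, and fix a `d`-tuple `(v̄1,…,v̄d)` of vectors from
`M` with `det(v̄1,…,v̄d) = 2m`. For `v ∈ M` expanded as `v = ∑ ci • v̄i`, let `S(v)` be the
set of indices with `ci = ±1/2`. Then for any `v1, v2 ∈ M` with `S(v1) ≠ ∅` and
`S(v2) ≠ ∅`, one has `S(v1) = S(v2)`. -/
theorem stmt9 {n d : ℕ} (M : Finset (Fin n → ℚ))
    (b : Module.Basis (Fin d) ℚ (Submodule.span ℚ (M : Set (Fin n → ℚ))))
    (m : ℚ)
    (hvol : ∃ w : Fin d → M, detT M b w = m)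
    (hval : ∀ w : Fin d → M, detT M b w = 0 ∨ detT M b w = m ∨ detT M b w = -m ∨
      detT M b w = 2 * m ∨ detT M b w = -(2 * m))
    (vb : Fin d → M) (hvb : detT M b vb = 2 * m)
    (v1 v2 : Fin n → ℚ) (h1 : v1 ∈ M) (h2 : v2 ∈ M)
    (c1 c2 : Fin d → ℚ)
    (hc1 : v1 = ∑ i, c1 i • (vb i : Fin n → ℚ))
    (hc2 : v2 = ∑ i, c2 i • (vb i : Fin n → ℚ))
    (hS1 : {i : Fin d | c1 i = 1 / 2 ∨ c1 i = -(1 / 2)}.Nonempty)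
    (hS2 : {i : Fin d | c2 i = 1 / 2 ∨ c2 i = -(1 / 2)}.Nonempty) :
    {i : Fin d | c1 i = 1 / 2 ∨ c1 i = -(1 / 2)} =
      {i : Fin d | c2 i = 1 / 2 ∨ c2 i = -(1 / 2)} :=
  stmt9_general M b m hval vb hvb v1 v2 h1 h2 c1 c2 hc1 hc2 hS1 hS2
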